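/- Let R be a ring with identity and let f = Σ_{i≥0} a_i x^i, g = Σ_{i≥0} b_i x^i, h = Σ_{i≥0} c_i x^i be formal power series in R⟦x⟧. Then f is (g,h)-invertible in R⟦x⟧ if and only if a₀ is (b₀,c₀)-invertible in R and there exist reflexive inverses b₀⁺ of b₀ and c₀⁺ of c₀ such that, in R⟦x⟧ (with elements of R regarded as constant power series), (1 − b₀·b₀⁺)·(Σ_{i≥1} b_i x^i)·(1 + b₀⁺·(Σ_{i≥1} b_i x^i))⁻¹·(1 − b₀⁺·b₀) = 0 and (1 − c₀·c₀⁺)·(Σ_{i≥1} c_i x^i)·(1 + c₀⁺·(Σ_{i≥1} c_i x^i))⁻¹·(1 − c₀⁺·c₀) = 0 (both 1 + b₀⁺·(Σ_{i≥1} b_i x^i) and 1 + c₀⁺·(Σ_{i≥1} c_i x^i) are units of R⟦x⟧ since their constant term is 1). -/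

import Mathlib

/-!
Write `b₀ = g(0)`, `u = 1 + b⁺ (g - b₀)` (a unit) and `r = (1 - b₀ b⁺) (g - b₀) u⁻¹`. Then
`g = (b₀ + r) u` always, and the displayed expression is `r (1 - b⁺ b₀)`; so it vanishes iff
`b₀ + r = (1 + r b⁺) b₀`, i.e. `g = m b₀ u` with `m` and `u` of constant term `1`. Given such
factorisations of `g` and `h`, the `(g, h)`-invertibility of `f` follows from the
`(b₀, c₀)`-invertibility of `v f m`, a perturbation of `a₀` by a series `r` without constant
term, and `(b, c)`-inverses survive perturbations for which `1 + r y` and `1 + y r` are units.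
Conversely, `(g, h)`-invertibility makes `g` regular, `g w g = g`, and then the expression is
`(1 - b₀ w₀) X` for `X = g u⁻¹ (1 - w₀ b₀)`, which satisfies `X = (g w - b₀ w₀) X` and so vanishes.
-/

/-- `y` is the (b,c)-inverse of `a`: `c*a*y = c`, `y*a*b = b`, `y ∈ bS ∩ Sc`. -/
def IsBCInverse {S : Type*} [Ring S] (a b c y : S) : Prop :=
  c * a * y = c ∧ y * a * b = b ∧ (∃ s, y = b * s) ∧ (∃ t, y = t * c)

section RingInverses

variable {S : Type*} [Ring S]

theorem exists_isBCInverse_iff {a b c : S} :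
    (∃ y, IsBCInverse a b c y) ↔ (∃ s, c * a * b * s = c) ∧ ∃ t, t * (c * a * b) = b := by
  constructor
  · rintro ⟨y, hcy, hyb, ⟨s, rfl⟩, ⟨t, hyt⟩⟩
    refine ⟨⟨s, by simpa only [mul_assoc] using hcy⟩, ⟨t, ?_⟩⟩
    rw [hyt] at hyb
    simpa only [mul_assoc] using hyb
  · rintro ⟨⟨s, hs⟩, ⟨t, ht⟩⟩
    refine ⟨t * (c * a * b) * s, ?_, ?_, ⟨s, by rw [ht]⟩, ⟨t, by rw [mul_assoc t, hs]⟩⟩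
    · calc c * a * (t * (c * a * b) * s) = c * a * (t * (c * a * b)) * s := by
            simp only [mul_assoc]
        _ = c := by rw [ht, hs]
    · calc t * (c * a * b) * s * a * b = t * (c * a * b * s) * a * b := by
            simp only [mul_assoc]
        _ = b := by rw [hs]; simpa only [mul_assoc] using ht

theorem IsBCInverse.map {T : Type*} [Ring T] (φ : S →+* T) {a b c y : S}
    (h : IsBCInverse a b c y) : IsBCInverse (φ a) (φ b) (φ c) (φ y) := by
  obtain ⟨hcy, hyb, ⟨s, rfl⟩, ⟨t, ht⟩⟩ := h
  exact ⟨by rw [← map_mul, ← map_mul, hcy], by rw [← map_mul, ← map_mul, hyb],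
    ⟨φ s, map_mul φ b s⟩, ⟨φ t, by rw [ht, map_mul]⟩⟩

theorem IsBCInverse.exists_mul_mul_left {a b c y : S} (h : IsBCInverse a b c y) :
    ∃ k, b * k * b = b := by
  obtain ⟨-, hyb, ⟨s, rfl⟩, -⟩ := h
  exact ⟨s * a, by simpa only [mul_assoc] using hyb⟩

theorem IsBCInverse.exists_mul_mul_right {a b c y : S} (h : IsBCInverse a b c y) :
    ∃ k, c * k * c = c := by
  obtain ⟨hcy, -, -, ⟨t, rfl⟩⟩ := h
  exact ⟨a * t, by simpa only [mul_assoc] using hcy⟩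

theorem exists_isBCInverse_of_units {a b c m u n v : S} (hm : IsUnit m) (hu : IsUnit u)
    (hn : IsUnit n) (hv : IsUnit v) (h : ∃ y, IsBCInverse (v * a * m) b c y) :
    ∃ y, IsBCInverse a (m * b * u) (n * c * v) y := by
  obtain ⟨m, rfl⟩ := hm
  obtain ⟨u, rfl⟩ := hu
  obtain ⟨n, rfl⟩ := hn
  obtain ⟨v, rfl⟩ := hv
  obtain ⟨⟨s, hs⟩, ⟨t, ht⟩⟩ := exists_isBCInverse_iff.mp h
  refine exists_isBCInverse_iff.mpr ⟨⟨↑u⁻¹ * s * v, ?_⟩, ⟨m * t * ↑n⁻¹, ?_⟩⟩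
  · calc n * c * v * a * (m * b * u) * (↑u⁻¹ * s * v)
          = n * (c * (v * a * m) * b * s) * v := by simp [mul_assoc]
      _ = n * c * v := by rw [hs, mul_assoc]
  · calc m * t * ↑n⁻¹ * (n * c * v * a * (m * b * u))
          = m * (t * (c * (v * a * m) * b)) * u := by simp [mul_assoc]
      _ = m * b * u := by rw [ht, mul_assoc]

theorem IsBCInverse.exists_add {a b c y r : S} (h : IsBCInverse a b c y)
    (hry : IsUnit (1 + r * y)) (hyr : IsUnit (1 + y * r)) :
    ∃ y', IsBCInverse (a + r) b c y' := by
  obtain ⟨hcy, hyb, ⟨s, hs⟩, ⟨t, ht⟩⟩ := h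
  obtain ⟨P, hP⟩ := hry
  obtain ⟨Q, hQ⟩ := hyr
  refine exists_isBCInverse_iff.mpr ⟨⟨s * ↑P⁻¹, ?_⟩, ⟨↑Q⁻¹ * t, ?_⟩⟩
  · calc c * (a + r) * b * (s * ↑P⁻¹) = (c * a * y + c * r * y) * ↑P⁻¹ := by
          simp only [hs, mul_assoc, add_mul, mul_add]
      _ = c := by rw [hcy, mul_assoc c r, ← mul_one_add, ← hP, mul_assoc, Units.mul_inv, mul_one]
  · calc ↑Q⁻¹ * t * (c * (a + r) * b) = ↑Q⁻¹ * (y * a * b + y * r * b) := by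
          simp only [ht, mul_assoc, add_mul, mul_add]
      _ = b := by rw [hyb, ← one_add_mul, ← hQ, ← mul_assoc, Units.inv_mul, one_mul]

def IsReflexiveInverse (b x : S) : Prop :=
  b * x * b = b ∧ x * b * x = x

theorem isReflexiveInverse_of_mul_mul {b k : S} (h : b * k * b = b) :
    IsReflexiveInverse b (k * b * k) := by
  constructor
  · calc b * (k * b * k) * b = b * k * b * k * b := by simp only [mul_assoc]
      _ = b := by rw [h, h]
  · have hkb : k * b * (k * b) = k * b := by rw [mul_assoc k b, ← mul_assoc b k b, h]
    calc k * b * k * b * (k * b * k) = k * b * (k * b) * (k * b * k) := by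
          simp only [mul_assoc]
      _ = k * b * k := by rw [hkb, ← mul_assoc, hkb]

theorem IsReflexiveInverse.map {T : Type*} [Ring T] (φ : S →+* T) {b x : S}
    (h : IsReflexiveInverse b x) : IsReflexiveInverse (φ b) (φ x) := by
  obtain ⟨h₁, h₂⟩ := h
  exact ⟨by rw [← map_mul, ← map_mul, h₁], by rw [← map_mul, ← map_mul, h₂]⟩

end RingInverses

namespace PowerSeries

variable {R : Type*} [Ring R]

theorem isUnit_of_constantCoeff_eq_one {u : R⟦X⟧} (h : constantCoeff u = 1) : IsUnit u := by
  rw [isUnit_iff_constantCoeff, h]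
  exact isUnit_one

theorem eq_zero_of_eq_mul_of_constantCoeff_eq_zero {q φ : R⟦X⟧} (hq : constantCoeff q = 0)
    (h : φ = q * φ) : φ = 0 :=
  (isUnit_of_constantCoeff_eq_one (by simp [hq])).mul_right_eq_zero.mp
    (by rw [sub_mul, one_mul, ← h, sub_self] : (1 - q) * φ = 0)

noncomputable def regularityDefect (g : R⟦X⟧) (b' : R) : R⟦X⟧ :=
  (1 - C (constantCoeff g) * C b') * (g - C (constantCoeff g))
    * Ring.inverse (1 + C b' * (g - C (constantCoeff g))) * (1 - C b' * C (constantCoeff g))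

theorem regularityDefect_eq_zero_of_mul_mul {g w : R⟦X⟧} (hw : g * w * g = g) :
    regularityDefect g (constantCoeff w) = 0 := by
  set b := constantCoeff g
  set b' := constantCoeff w
  set u := 1 + C b' * (g - C b)
  have hu : IsUnit u := isUnit_of_constantCoeff_eq_one (by simp [u, b])
  have hb : C b * C b' * C b = C b := by
    have := congrArg constantCoeff hw
    rw [map_mul, map_mul] at this
    rw [← map_mul, ← map_mul, this]
  have hbu : C b * u = C b * C b' * g := by
    simp only [u, mul_add, mul_one, mul_sub, ← mul_assoc, hb]
    abel
  have hbf : C b * (1 - C b' * C b) = 0 := by rw [mul_sub, mul_one, ← mul_assoc, hb, sub_self]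
  -- `g * w` fixes left multiples of `g`, and `C b * C b'` kills this one.
  have hX : g * Ring.inverse u * (1 - C b' * C b) = 0 := by
    refine eq_zero_of_eq_mul_of_constantCoeff_eq_zero (q := g * w - C b * C b') (by simp [b, b'])
      ?_
    symm
    calc (g * w - C b * C b') * (g * Ring.inverse u * (1 - C b' * C b))
        = g * w * g * Ring.inverse u * (1 - C b' * C b)
          - C b * C b' * g * Ring.inverse u * (1 - C b' * C b) := by
          simp only [sub_mul, mul_assoc]
      _ = g * Ring.inverse u * (1 - C b' * C b)
          - C b * (u * Ring.inverse u) * (1 - C b' * C b) := by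
          rw [hw, ← hbu]
          simp only [mul_assoc]
      _ = g * Ring.inverse u * (1 - C b' * C b) := by
          rw [Ring.mul_inverse_cancel u hu, mul_one, hbf, sub_zero]
  calc regularityDefect g b' = (1 - C b * C b') * (g - C b) * Ring.inverse u * (1 - C b' * C b) :=
        rfl
    _ = (1 - C b * C b') * (g * Ring.inverse u * (1 - C b' * C b)) := by
        rw [mul_sub (1 - C b * C b') g, sub_mul 1 (C b * C b') (C b), one_mul, hb, sub_self,
          sub_zero]
        simp only [mul_assoc]
    _ = 0 := by rw [hX, mul_zero]

theorem exists_eq_mul_C_mul_of_regularityDefect_eq_zero {g : R⟦X⟧} {b' : R}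
    (h : regularityDefect g b' = 0) :
    ∃ m u : R⟦X⟧, constantCoeff m = 1 ∧ constantCoeff u = 1 ∧
      g = m * C (constantCoeff g) * u := by
  set b := constantCoeff g
  set u := 1 + C b' * (g - C b)
  have hu : constantCoeff u = 1 := by simp [u, b]
  set r := (1 - C b * C b') * (g - C b) * Ring.inverse u
  have hr : r * C b' * C b = r := by
    have h' : r * (1 - C b' * C b) = 0 := h
    rw [mul_sub, mul_one, sub_eq_zero] at h'
    rw [mul_assoc, ← h']
  have hru : r * u = (1 - C b * C b') * (g - C b) := by
    rw [mul_assoc, Ring.inverse_mul_cancel u (isUnit_of_constantCoeff_eq_one hu), mul_one]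
  refine ⟨1 + r * C b', u, by simp [r, b], hu, ?_⟩
  calc g = C b * u + r * u := by
        rw [hru]
        simp only [u]
        noncomm_ring
    _ = (1 + r * C b') * C b * u := by rw [← add_mul, add_mul 1, one_mul, hr]

theorem exists_isBCInverse_mul_C_mul {f m u n v : R⟦X⟧} {b c y : R}
    (hy : IsBCInverse (constantCoeff f) b c y) (hm : constantCoeff m = 1)
    (hu : constantCoeff u = 1) (hn : constantCoeff n = 1) (hv : constantCoeff v = 1) :
    ∃ y', IsBCInverse f (m * C b * u) (n * C c * v) y' := by
  refine exists_isBCInverse_of_units (isUnit_of_constantCoeff_eq_one hm)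
    (isUnit_of_constantCoeff_eq_one hu) (isUnit_of_constantCoeff_eq_one hn)
    (isUnit_of_constantCoeff_eq_one hv) ?_
  set r := v * f * m - C (constantCoeff f)
  have hr : constantCoeff r = 0 := by simp [r, hv, hm]
  have := (hy.map C).exists_add (r := r) (isUnit_of_constantCoeff_eq_one (by simp [hr]))
    (isUnit_of_constantCoeff_eq_one (by simp [hr]))
  rwa [add_sub_cancel] at this

end PowerSeries

open PowerSeries in
/-- a power series `f` is `(g,h)`-invertible in `R⟦x⟧` iff its constant
term `a₀` is `(b₀,c₀)`-invertible in `R` and there are reflexive inverses `b₀⁺, c₀⁺` of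
the constant terms `b₀, c₀` such that the two displayed equations hold in `R⟦x⟧`
(here `Σ_{i≥1} b_i x^i = g - C b₀` and `Σ_{i≥1} c_i x^i = h - C c₀`). -/
theorem stmt10 {R : Type*} [Ring R] (f g h : PowerSeries R) :
    (∃ y, IsBCInverse f g h y) ↔
      ((∃ y₀, IsBCInverse (PowerSeries.constantCoeff f)
          (PowerSeries.constantCoeff g) (PowerSeries.constantCoeff h) y₀) ∧
       ∃ bp cp : R,
         (PowerSeries.constantCoeff g * bp * PowerSeries.constantCoeff g
            = PowerSeries.constantCoeff g ∧
          bp * PowerSeries.constantCoeff g * bp = bp) ∧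
         (PowerSeries.constantCoeff h * cp * PowerSeries.constantCoeff h
            = PowerSeries.constantCoeff h ∧
          cp * PowerSeries.constantCoeff h * cp = cp) ∧
         (1 - PowerSeries.C (PowerSeries.constantCoeff g) * PowerSeries.C bp)
           * (g - PowerSeries.C (PowerSeries.constantCoeff g))
           * Ring.inverse (1 + PowerSeries.C bp
               * (g - PowerSeries.C (PowerSeries.constantCoeff g)))
           * (1 - PowerSeries.C bp
               * PowerSeries.C (PowerSeries.constantCoeff g)) = 0 ∧
         (1 - PowerSeries.C (PowerSeries.constantCoeff h) * PowerSeries.C cp)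
           * (h - PowerSeries.C (PowerSeries.constantCoeff h))
           * Ring.inverse (1 + PowerSeries.C cp
               * (h - PowerSeries.C (PowerSeries.constantCoeff h)))
           * (1 - PowerSeries.C cp
               * PowerSeries.C (PowerSeries.constantCoeff h)) = 0) := by
  constructor
  · rintro ⟨y, hy⟩
    obtain ⟨k, hk⟩ := hy.exists_mul_mul_left
    obtain ⟨k', hk'⟩ := hy.exists_mul_mul_right
    have hw := isReflexiveInverse_of_mul_mul hk
    have hw' := isReflexiveInverse_of_mul_mul hk'
    have hw₀ := hw.map (constantCoeff (R := R))
    have hw₀' := hw'.map (constantCoeff (R := R))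
    exact ⟨⟨_, hy.map constantCoeff⟩, _, _, hw₀, hw₀', regularityDefect_eq_zero_of_mul_mul hw.1, regularityDefect_eq_zero_of_mul_mul hw'.1⟩
  · rintro ⟨⟨y₀, hy₀⟩, bp, cp, -, -, hg, hh⟩
    obtain ⟨m, u, hm, hu, hgmu⟩ := exists_eq_mul_C_mul_of_regularityDefect_eq_zero hg
    obtain ⟨n, v, hn, hv, hhnv⟩ := exists_eq_mul_C_mul_of_regularityDefect_eq_zero hh
    rw [hgmu, hhnv]
    exact exists_isBCInverse_mul_C_mul hy₀ hm hu hn hv
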